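/- The matrix square root is operator concave: for positive semi-definite real d×d matrices A, B and λ ∈ [0,1], √(λA + (1−λ)B) ⪰ λ√A + (1−λ)√B in the Loewner order. -/

import Mathlib

open scoped Classical

/-- The PSD square root of a matrix (zero if the matrix is not PSD). -/
noncomputable def psdSqrt {d : ℕ} (M : Matrix (Fin d) (Fin d) ℝ) :
    Matrix (Fin d) (Fin d) ℝ :=
  if h : M.PosSemidef then
    (h.1.eigenvectorUnitary : Matrix (Fin d) (Fin d) ℝ) *
      Matrix.diagonal ((↑) ∘ (√·) ∘ h.1.eigenvalues) *
      (star h.1.eigenvectorUnitary : Matrix (Fin d) (Fin d) ℝ)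
  else 0

/-!
Squaring is operator convex: for self-adjoint `a, b` the identity
`t a² + (1 - t) b² - (t a + (1 - t) b)² = t (1 - t) (a - b)²` shows
`(t √A + (1 - t) √B)² ⪯ t A + (1 - t) B`. The square root is operator monotone, in the form
`0 ⪯ S, 0 ⪯ T, S² ⪯ T² ⟹ S ⪯ T`: if `T - S` had an eigenvector `v` with eigenvalue `μ < 0`,
then `T² - S² = T (T - S) + (T - S) S` gives `v* (T² - S²) v = μ (v* T v + v* S v) ≤ 0`,
forcing `T v = S v = 0` and hence `μ v = 0`. Applied with `T = √(t A + (1 - t) B)` this gives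
the claim.
-/

open scoped MatrixOrder ComplexOrder

theorem IsSelfAdjoint.convexComb_mul_self_le {A : Type*} [Ring A] [StarRing A] [PartialOrder A]
    [StarOrderedRing A] [Algebra ℝ A] [StarModule ℝ A] {a b : A} (hab : IsSelfAdjoint (a - b))
    {t : ℝ} (ht₀ : 0 ≤ t) (ht₁ : t ≤ 1) :
    (t • a + (1 - t) • b) * (t • a + (1 - t) • b) ≤ t • (a * a) + (1 - t) • (b * b) := by
  have hgap : t • (a * a) + (1 - t) • (b * b) - (t • a + (1 - t) • b) * (t • a + (1 - t) • b) =
      (t * (1 - t)) • ((a - b) * (a - b)) := by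
    simp only [add_mul, mul_add, sub_mul, mul_sub, smul_mul_assoc, mul_smul_comm]
    module
  rw [← sub_nonneg, hgap]
  exact smul_nonneg (mul_nonneg ht₀ (sub_nonneg.2 ht₁)) hab.mul_self_nonneg

namespace Matrix

variable {𝕜 n : Type*} [RCLike 𝕜] [Fintype n]

theorem le_of_mul_self_le_mul_self {S T : Matrix n n 𝕜} (hS : 0 ≤ S) (hT : 0 ≤ T)
    (h : S * S ≤ T * T) : S ≤ T := by
  classical
  rw [nonneg_iff_posSemidef] at hS hT
  rw [le_iff] at h ⊢
  have hD : (T - S).IsHermitian := hT.1.sub hS.1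
  rw [hD.posSemidef_iff_eigenvalues_nonneg, Pi.le_def]
  intro i
  by_contra! hμ
  set μ := hD.eigenvalues i
  set v : n → 𝕜 := ⇑(hD.eigenvectorBasis i)
  have hv : (T - S) *ᵥ v = μ • v := hD.mulVec_eigenvectorBasis i
  have hv' : star v ᵥ* (T - S) = μ • star v := by
    rw [← hD.eq, ← star_mulVec, hv, star_smul, star_trivial]
  have hquad : star v ⬝ᵥ (T * T - S * S) *ᵥ v =
      μ • (star v ⬝ᵥ T *ᵥ v + star v ⬝ᵥ S *ᵥ v) := by
    rw [show T * T - S * S = T * (T - S) + (T - S) * S by noncomm_ring, add_mulVec,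
      dotProduct_add, ← mulVec_mulVec, ← mulVec_mulVec, hv, mulVec_smul, dotProduct_smul,
      dotProduct_mulVec (star v) (T - S), hv', smul_dotProduct, smul_add]
  have hTv := hT.dotProduct_mulVec_nonneg v
  have hSv := hS.dotProduct_mulVec_nonneg v
  have hsum : star v ⬝ᵥ T *ᵥ v + star v ⬝ᵥ S *ᵥ v = 0 := by
    have hge := h.dotProduct_mulVec_nonneg v
    rw [hquad] at hge
    have hle := smul_nonpos_of_nonpos_of_nonneg hμ.le (add_nonneg hTv hSv)
    exact (smul_eq_zero.mp (le_antisymm hle hge)).resolve_left hμ.ne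
  obtain ⟨hTv₀, hSv₀⟩ := (add_eq_zero_iff_of_nonneg hTv hSv).mp hsum
  have hμv : μ • v = 0 := by
    rw [← hv, sub_mulVec, (hT.dotProduct_mulVec_zero_iff v).mp hTv₀,
      (hS.dotProduct_mulVec_zero_iff v).mp hSv₀, sub_zero]
  have hv₀ : v = 0 := (smul_eq_zero.mp hμv).resolve_left hμ.ne
  exact hD.eigenvectorBasis.orthonormal.ne_zero i (by simpa [v] using hv₀)

end Matrix

theorem psdSqrt_eq_cfcSqrt {d : ℕ} {M : Matrix (Fin d) (Fin d) ℝ} (hM : M.PosSemidef) :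
    psdSqrt M = CFC.sqrt M := by
  rw [psdSqrt, dif_pos hM, CFC.sqrt_eq_cfc, cfc_nnreal_eq_real _ M, hM.1.cfc_eq,
    Matrix.IsHermitian.cfc, Unitary.conjStarAlgAut_apply, RCLike.ofReal_real_eq_id]
  unfold Real.sqrt
  rfl

/-- Operator concavity of the matrix square root:
`√(λA + (1−λ)B) ⪰ λ√A + (1−λ)√B` for PSD `A, B` and `λ ∈ [0,1]`. -/
theorem stmt17 {d : ℕ} (A B : Matrix (Fin d) (Fin d) ℝ)
    (hA : A.PosSemidef) (hB : B.PosSemidef) (l : ℝ) (hl : l ∈ Set.Icc (0 : ℝ) 1) :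
    (psdSqrt (l • A + (1 - l) • B) - (l • psdSqrt A + (1 - l) • psdSqrt B)).PosSemidef := by
  obtain ⟨hl₀, hl₁⟩ := hl
  have hC : (l • A + (1 - l) • B).PosSemidef := (hA.smul hl₀).add (hB.smul (sub_nonneg.2 hl₁))
  rw [psdSqrt_eq_cfcSqrt hA, psdSqrt_eq_cfcSqrt hB, psdSqrt_eq_cfcSqrt hC, ← Matrix.le_iff]
  refine Matrix.le_of_mul_self_le_mul_self ?_ (CFC.sqrt_nonneg _) ?_
  · exact add_nonneg (smul_nonneg hl₀ (CFC.sqrt_nonneg A))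
      (smul_nonneg (sub_nonneg.2 hl₁) (CFC.sqrt_nonneg B))
  · have hsub : IsSelfAdjoint (CFC.sqrt A - CFC.sqrt B) :=
      (CFC.sqrt_nonneg A).isSelfAdjoint.sub (CFC.sqrt_nonneg B).isSelfAdjoint
    simpa only [CFC.sqrt_mul_sqrt_self _ hA.nonneg, CFC.sqrt_mul_sqrt_self _ hB.nonneg,
      CFC.sqrt_mul_sqrt_self _ hC.nonneg] using hsub.convexComb_mul_self_le hl₀ hl₁
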